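/- Let Z and Y be measurable spaces, let σ be a probability measure on Z, let ν and ρ be probability measures on Y with ρ ≪ ν and dρ/dν ≤ M ν-almost everywhere for some M < ∞, and let λ be a probability measure on Z×Y whose second (Y-)marginal equals ρ. Then KL(λ | σ⊗ν) = KL(λ | σ⊗ρ) + KL(ρ | ν), as an identity in [0,∞]; in particular KL(ρ|ν) is finite and KL(λ | σ⊗ν) is finite if and only if KL(λ | σ⊗ρ) is finite. -/

import Mathlib

open MeasureTheory Set Filter
open scoped ENNReal Classical

noncomputable section

/-- Kullback–Leibler divergence via `φ(s) = s log s − s + 1`. -/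
def KLphi (s : ℝ) : ℝ := s * Real.log s - s + 1

noncomputable def KL {A : Type*} [MeasurableSpace A] (α β : Measure A) : ℝ≥0∞ :=
  if α ≪ β then ∫⁻ x, ENNReal.ofReal (KLphi ((α.rnDeriv β x).toReal)) ∂β else ⊤

/-- Product of two measures. -/
noncomputable def prodM {A B : Type*} [MeasurableSpace A] [MeasurableSpace B]
    (α : Measure A) (β : Measure B) : Measure (A × B) :=
  α.bind fun a => β.map (Prod.mk a)

/-
Since `σ ⊗ ρ = (σ ⊗ ν).withDensity (g ∘ snd)` with `g = dρ/dν`, the chain rule for densities gives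
`log dλ/d(σ⊗ν) = log dλ/d(σ⊗ρ) + log g(y)` λ-almost everywhere. Integrating against λ, whose
`Y`-marginal is ρ, the last term contributes `∫ log g dρ = KL(ρ|ν)`, which is finite because `g` is
bounded. When `KL(ρ|ν) = ∞` the identity still holds: by the data processing inequality along the
projection to `Y`, `KL(λ|σ⊗ν) ≥ KL(ρ|ν)`. `KL` agrees with Mathlib's `klDiv` on finite measures.
-/

open InformationTheory

lemma KL_eq_klDiv {A : Type*} [MeasurableSpace A] (α β : Measure A) [IsFiniteMeasure α]
    [IsFiniteMeasure β] : KL α β = klDiv α β := by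
  have hφ : KLphi = klFun := funext fun s => by simp only [KLphi, klFun_apply]; ring
  rw [KL, klDiv_eq_lintegral_klFun, hφ]

lemma prodM_eq_prod {A B : Type*} [MeasurableSpace A] [MeasurableSpace B]
    (α : Measure A) (β : Measure B) [SFinite β] : prodM α β = α.prod β :=
  (Measure.prod_def α β).symm

section

variable {α : Type*} [MeasurableSpace α]

lemma absolutelyContinuous_withDensity_of_ae_ne_zero {lam μ : Measure α} {f : α → ℝ≥0∞}
    (hf : Measurable f) (hlμ : lam ≪ μ) (hf0 : ∀ᵐ x ∂lam, f x ≠ 0) :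
    lam ≪ μ.withDensity f := by
  refine Measure.AbsolutelyContinuous.mk fun s hs h0 => ?_
  rw [withDensity_apply _ hs, lintegral_eq_zero_iff hf] at h0
  have hfalse : ∀ᵐ x ∂lam.restrict s, False := by
    filter_upwards [hlμ.restrict s h0, ae_restrict_of_ae hf0] with x hx hx0 using hx0 hx
  simpa [hs] using ae_iff.mp hfalse

lemma llr_ae_eq_llr_add_llr {lam π μ : Measure α} [SigmaFinite lam] [SigmaFinite π]
    [SigmaFinite μ] (hlπ : lam ≪ π) (hπμ : π ≪ μ) :
    llr lam μ =ᵐ[lam] llr lam π + llr π μ := by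
  filter_upwards [hlπ.trans hπμ (Measure.rnDeriv_mul_rnDeriv hlπ), Measure.rnDeriv_pos hlπ,
    hlπ (Measure.rnDeriv_lt_top lam π), hlπ (Measure.rnDeriv_pos hπμ),
    hlπ.trans hπμ (Measure.rnDeriv_lt_top π μ)] with x hx h1 h2 h3 h4
  simp only [llr_def, Pi.add_apply, ← hx, Pi.mul_apply, ENNReal.toReal_mul]
  exact Real.log_mul (ENNReal.toReal_pos h1.ne' h2.ne).ne' (ENNReal.toReal_pos h3.ne' h4.ne).ne'

lemma klDiv_eq_klDiv_add_integral_llr {lam π μ : Measure α} [IsProbabilityMeasure lam]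
    [IsProbabilityMeasure π] [IsProbabilityMeasure μ] (hlπ : lam ≪ π) (hπμ : π ≪ μ)
    (hint : Integrable (llr π μ) lam) (hnonneg : 0 ≤ ∫ x, llr π μ x ∂lam) :
    klDiv lam μ = klDiv lam π + ENNReal.ofReal (∫ x, llr π μ x ∂lam) := by
  have hsplit := llr_ae_eq_llr_add_llr hlπ hπμ
  have hint_iff : Integrable (llr lam μ) lam ↔ Integrable (llr lam π) lam :=
    ⟨fun h => (h.sub hint).congr (by filter_upwards [hsplit] with x hx; simp [hx]),
      fun h => (h.add hint).congr hsplit.symm⟩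
  by_cases hlπint : Integrable (llr lam π) lam
  · have hlμint := hint_iff.mpr hlπint
    rw [klDiv_of_ac_of_integrable (hlπ.trans hπμ) hlμint, klDiv_of_ac_of_integrable hlπ hlπint,
      integral_congr_ae hsplit, integral_add' hlπint hint]
    simp only [probReal_univ, add_sub_cancel_right]
    exact ENNReal.ofReal_add (by simpa using integral_llr_add_sub_measure_univ_nonneg hlπ hlπint)
      hnonneg
  · rw [klDiv_of_not_integrable hlπint, klDiv_of_not_integrable (hint_iff.not.mpr hlπint),
      top_add]

end

section

variable {Z Y : Type*} [MeasurableSpace Z] [MeasurableSpace Y]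

lemma prod_eq_withDensity_rnDeriv_snd (σ : Measure Z) [SFinite σ] {ρ ν : Measure Y}
    [IsFiniteMeasure ρ] [IsFiniteMeasure ν] (hac : ρ ≪ ν) :
    σ.prod ρ = (σ.prod ν).withDensity (fun p => ρ.rnDeriv ν p.2) := by
  conv_lhs => rw [← Measure.withDensity_rnDeriv_eq ρ ν hac]
  exact prod_withDensity_right (Measure.measurable_rnDeriv ρ ν)

lemma integrable_llr_of_rnDeriv_le {ρ ν : Measure Y} [IsFiniteMeasure ρ] [IsFiniteMeasure ν]
    (hac : ρ ≪ ν) {M : ℝ} (hM : ∀ᵐ y ∂ν, ρ.rnDeriv ν y ≤ ENNReal.ofReal M) :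
    Integrable (llr ρ ν) ρ := by
  rw [← integrable_rnDeriv_mul_log_iff hac]
  obtain ⟨C, hC⟩ := (isCompact_Icc (a := 0) (b := (ENNReal.ofReal M).toReal))
    |>.exists_bound_of_continuousOn Real.continuous_mul_log.continuousOn
  refine Integrable.of_bound (by fun_prop) C ?_
  filter_upwards [hM] with y hy
  exact hC _ ⟨ENNReal.toReal_nonneg, ENNReal.toReal_mono ENNReal.ofReal_ne_top hy⟩

theorem klDiv_prod_eq_klDiv_prod_add (σ : Measure Z) [IsProbabilityMeasure σ]
    (ν : Measure Y) [IsProbabilityMeasure ν] {ρ : Measure Y} [IsProbabilityMeasure ρ]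
    (lam : Measure (Z × Y)) [IsProbabilityMeasure lam] (hl : lam.map Prod.snd = ρ) :
    klDiv lam (σ.prod ν) = klDiv lam (σ.prod ρ) + klDiv ρ ν := by
  by_cases hρν : klDiv ρ ν = ⊤
  · -- data processing along `Prod.snd`
    have hle : klDiv ρ ν ≤ klDiv lam (σ.prod ν) := by
      simpa [hl, Measure.map_snd_prod] using klDiv_map_le lam (σ.prod ν) measurable_snd
    rw [hρν, add_top]
    exact eq_top_iff.mpr (hρν ▸ hle)
  obtain ⟨hac, hint⟩ := klDiv_ne_top_iff.mp hρν
  have hrep := prod_eq_withDensity_rnDeriv_snd σ hac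
  have hπμ : σ.prod ρ ≪ σ.prod ν := Measure.AbsolutelyContinuous.rfl.prod hac
  by_cases hlμ : lam ≪ σ.prod ν
  swap
  · rw [klDiv_of_not_ac hlμ, klDiv_of_not_ac fun h => hlμ (h.trans hπμ), top_add]
  have hlπ : lam ≪ σ.prod ρ := by
    rw [hrep]
    refine absolutelyContinuous_withDensity_of_ae_ne_zero (by fun_prop) hlμ ?_
    refine ae_of_ae_map (p := fun y => ρ.rnDeriv ν y ≠ 0) measurable_snd.aemeasurable ?_
    rw [hl]
    exact (Measure.rnDeriv_pos hac).mono fun _ h => h.ne'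
  have hllr : llr (σ.prod ρ) (σ.prod ν) =ᵐ[lam] fun p => llr ρ ν p.2 := by
    refine hlμ.ae_le ?_
    rw [hrep]
    filter_upwards [Measure.rnDeriv_withDensity (σ.prod ν) (f := fun p => ρ.rnDeriv ν p.2)
      (by fun_prop)] with p hp
    simp only [llr_def, hp]
  have hint' : Integrable (llr (σ.prod ρ) (σ.prod ν)) lam := by
    refine Integrable.congr ?_ hllr.symm
    rw [← hl] at hint ⊢
    exact hint.comp_measurable measurable_snd
  have hval : ∫ p, llr (σ.prod ρ) (σ.prod ν) p ∂lam = (klDiv ρ ν).toReal := by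
    rw [integral_congr_ae hllr, toReal_klDiv_of_measure_eq hac (by simp), ← hl,
      integral_map measurable_snd.aemeasurable (measurable_llr _ _).aestronglyMeasurable]
  rw [klDiv_eq_klDiv_add_integral_llr hlπ hπμ hint' (hval ▸ ENNReal.toReal_nonneg), hval,
    ENNReal.ofReal_toReal hρν]

end

/-- the entropy splitting identity
`KL(λ | σ⊗ν) = KL(λ | σ⊗ρ) + KL(ρ | ν)` for a probability measure `λ` on `Z×Y` with
`Y`-marginal `ρ`, where `ρ ≪ ν` with bounded density; in particular `KL(ρ|ν)` is finite,
and `KL(λ|σ⊗ν)` is finite iff `KL(λ|σ⊗ρ)` is. -/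
theorem stmt9 {Z Y : Type*} [MeasurableSpace Z] [MeasurableSpace Y]
    (σ : Measure Z) [IsProbabilityMeasure σ]
    (ν ρ : Measure Y) [IsProbabilityMeasure ν] [IsProbabilityMeasure ρ]
    (hac : ρ ≪ ν) (M : ℝ) (hM : ∀ᵐ y ∂ν, ρ.rnDeriv ν y ≤ ENNReal.ofReal M)
    (lam : Measure (Z × Y)) [IsProbabilityMeasure lam] (hl : lam.map Prod.snd = ρ) :
    KL lam (prodM σ ν) = KL lam (prodM σ ρ) + KL ρ ν ∧
    KL ρ ν ≠ ⊤ ∧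
    (KL lam (prodM σ ν) ≠ ⊤ ↔ KL lam (prodM σ ρ) ≠ ⊤) := by
  simp only [prodM_eq_prod, KL_eq_klDiv]
  have hρν : klDiv ρ ν ≠ ⊤ := klDiv_ne_top hac (integrable_llr_of_rnDeriv_le hac hM)
  have hsplit := klDiv_prod_eq_klDiv_prod_add σ ν lam hl
  refine ⟨hsplit, hρν, ?_⟩
  rw [hsplit, ENNReal.add_ne_top]
  exact and_iff_left hρν
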